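/- Let X, Y be finite disjoint subsets of Γ. If A ∈ 𝔄_X⁻ and B ∈ 𝔄_Y⁻, then {A,B} = 0. Conversely, assuming the monomials supported in X ∪ Y are linearly independent in 𝔄: if A ∈ 𝔄_X, B ∈ 𝔄_Y and {A,B} = 0, then either A = 0, or B = 0, or both A ∈ 𝔄_X⁻ and B ∈ 𝔄_Y⁻. -/

import Mathlib

/-!
Writing a monomial as a word in the generators `a x`, `(a x)*`, and using that generators at
distinct sites anticommute, two monomials on disjoint sites commute up to the sign `(-1)^(m n)`,
where `m` and `n` count their odd factors; bilinearity then gives the first half.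
For the converse, expand `A` and `B` in the monomials along the enumeration `l`. The product of
the `p`-th monomial of `X` with the `q`-th of `Y` is `±` the basis monomial of `X ∪ Y` indexed by
the pair `(p, q)`, so linear independence turns `{A, B} = 0` into `(1 + (-1)^(m_p n_q)) c_p d_q = 0`
for all `p, q`. Fixing a nonzero coefficient on one side shows that every monomial occurring on the
other side is odd.
-/

open scoped Classical

/-- The canonical anticommutation relations for a family `a x` of annihilation
operators in a C*-algebra. -/
def IsCAR {Γ A : Type*} [Ring A] [StarRing A] (a : Γ → A) : Prop :=
  (∀ x y, a x * a y + a y * a x = 0) ∧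
  (∀ x y, star (a x) * star (a y) + star (a y) * star (a x) = 0) ∧
  (∀ x y, a x * star (a y) + star (a y) * a x = if x = y then (1 : A) else 0)

/-- The four possible factors of a monomial at a site `x`:
`1`, `a x`, `a x *`, and `a x * a x`. -/
def carFactor {Γ A : Type*} [Ring A] [StarRing A] (a : Γ → A) (k : Fin 4) (x : Γ) : A :=
  match k with
  | 0 => 1
  | 1 => a x
  | 2 => star (a x)
  | 3 => star (a x) * a x

/-- The monomial with factor pattern `k` along the enumeration `l` of a finite set of sites. -/
def carMonomial {Γ A : Type*} [Ring A] [StarRing A] (a : Γ → A) (l : List Γ)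
    (k : Γ → Fin 4) : A :=
  (l.map fun x => carFactor a (k x) x).prod

/-- The number of odd factors (`a x` or `a x *`) of the monomial with pattern `k` along `l`. -/
def carOddCount {Γ : Type*} (l : List Γ) (k : Γ → Fin 4) : ℕ :=
  l.countP fun x => decide (k x = 1 ∨ k x = 2)

/-- `𝔄_X`: the linear span of the monomials supported in the finite set `X`. -/
def carSpan {Γ A : Type*} [Ring A] [StarRing A] [Algebra ℂ A] (a : Γ → A) (X : Finset Γ) :
    Submodule ℂ A :=
  Submodule.span ℂ {m | ∃ (l : List Γ) (k : Γ → Fin 4),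
    l.Nodup ∧ l.toFinset = X ∧ m = carMonomial a l k}

/-- `𝔄_X⁺`: the linear span of the even monomials supported in the finite set `X`. -/
def carSpanEven {Γ A : Type*} [Ring A] [StarRing A] [Algebra ℂ A] (a : Γ → A) (X : Finset Γ) :
    Submodule ℂ A :=
  Submodule.span ℂ {m | ∃ (l : List Γ) (k : Γ → Fin 4),
    l.Nodup ∧ l.toFinset = X ∧ Even (carOddCount l k) ∧ m = carMonomial a l k}

/-- `𝔄_X⁻`: the linear span of the odd monomials supported in the finite set `X`. -/
def carSpanOdd {Γ A : Type*} [Ring A] [StarRing A] [Algebra ℂ A] (a : Γ → A) (X : Finset Γ) :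
    Submodule ℂ A :=
  Submodule.span ℂ {m | ∃ (l : List Γ) (k : Γ → Fin 4),
    l.Nodup ∧ l.toFinset = X ∧ Odd (carOddCount l k) ∧ m = carMonomial a l k}

section Anticommuting

variable {R : Type*} [Ring R]

theorem List.prod_mul_eq_of_forall_anticomm (L : List R) (q : R)
    (h : ∀ p ∈ L, p * q = -(q * p)) :
    L.prod * q = (-1 : ℤ) ^ L.length • (q * L.prod) := by
  induction L with
  | nil => simp
  | cons p t ih =>
    rw [List.prod_cons, mul_assoc, ih fun r hr => h r (List.mem_cons_of_mem _ hr), mul_smul_comm,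
      ← mul_assoc, h p List.mem_cons_self, List.length_cons, pow_succ, mul_neg_one, neg_smul,
      ← smul_neg, neg_mul, mul_assoc]

theorem List.prod_mul_prod_eq_of_forall_anticomm (L M : List R)
    (h : ∀ p ∈ L, ∀ q ∈ M, p * q = -(q * p)) :
    L.prod * M.prod = (-1 : ℤ) ^ (L.length * M.length) • (M.prod * L.prod) := by
  induction M with
  | nil => simp
  | cons q t ih =>
    rw [List.prod_cons, ← mul_assoc, L.prod_mul_eq_of_forall_anticomm q fun p hp =>
      h p hp q List.mem_cons_self, smul_mul_assoc, mul_assoc, ih fun p hp r hr =>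
      h p hp r (List.mem_cons_of_mem _ hr), mul_smul_comm, smul_smul, ← pow_add, List.length_cons,
      mul_add_one, add_comm, mul_assoc]

end Anticommuting

theorem anticomm_eq_zero_of_mem_span {R A : Type*} [CommSemiring R] [Semiring A] [Algebra R A]
    {S T : Set A} (h : ∀ u ∈ S, ∀ v ∈ T, u * v + v * u = 0) {u v : A}
    (hu : u ∈ Submodule.span R S) (hv : v ∈ Submodule.span R T) : u * v + v * u = 0 := by
  let anticomm : A →ₗ[R] A →ₗ[R] A := LinearMap.mul R A + (LinearMap.mul R A).flip
  have hbot : Submodule.span R (Set.image2 (fun m n => anticomm m n) S T) = ⊥ :=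
    Submodule.span_eq_bot.mpr <| by
      rintro _ ⟨m, hm, n, hn, rfl⟩
      exact h m hm n hn
  have hmem := Submodule.apply_mem_map₂ anticomm hu hv
  rw [Submodule.map₂_span_span, hbot, Submodule.mem_bot] at hmem
  simpa [anticomm] using hmem

theorem sum_smul_anticomm_sum_smul {ι κ R A : Type*} [Fintype ι] [Fintype κ] [CommSemiring R]
    [Semiring A] [Algebra R A] (c : ι → R) (d : κ → R) (u : ι → A) (v : κ → A) :
    (∑ i, c i • u i) * (∑ j, d j • v j) + (∑ j, d j • v j) * (∑ i, c i • u i) =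
      ∑ ij : ι × κ, (c ij.1 * d ij.2) • (u ij.1 * v ij.2 + v ij.2 * u ij.1) := by
  simp only [Finset.sum_mul_sum, Fintype.sum_prod_type, smul_add, Finset.sum_add_distrib,
    smul_mul_smul_comm, mul_comm (d _)]
  rw [Finset.sum_comm (f := fun j i => (c i * d j) • (v j * u i))]

theorem List.toFinset_filter_mem {Γ : Type*} {l : List Γ} {X : Finset Γ} (hX : X ⊆ l.toFinset) :
    (l.filter fun x => decide (x ∈ X)).toFinset = X := by
  rw [List.toFinset_filter]
  simpa [Finset.filter_mem_eq_inter] using hX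

section Words

variable {Γ A : Type*} [Ring A] [StarRing A] {a : Γ → A}

theorem IsCAR.mul_eq_neg_mul_of_ne (hCAR : IsCAR a) {x y : Γ} (hxy : x ≠ y) {u v : A}
    (hu : u = a x ∨ u = star (a x)) (hv : v = a y ∨ v = star (a y)) : u * v = -(v * u) := by
  obtain ⟨haa, hss, has⟩ := hCAR
  rcases hu with rfl | rfl <;> rcases hv with rfl | rfl
  · exact eq_neg_of_add_eq_zero_left (haa x y)
  · exact eq_neg_of_add_eq_zero_left (by simpa [hxy] using has x y)
  · exact eq_neg_of_add_eq_zero_right (by simpa [Ne.symm hxy] using has y x)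
  · exact eq_neg_of_add_eq_zero_left (hss x y)

variable (a) in
def carFactorWord (j : Fin 4) (x : Γ) : List A :=
  match j with
  | 0 => []
  | 1 => [a x]
  | 2 => [star (a x)]
  | 3 => [star (a x), a x]

variable (a) in
def carWord (l : List Γ) (k : Γ → Fin 4) : List A :=
  l.flatMap fun x => carFactorWord a (k x) x

theorem carMonomial_eq_prod_carWord (l : List Γ) (k : Γ → Fin 4) :
    carMonomial a l k = (carWord a l k).prod := by
  induction l with
  | nil => rfl
  | cons x t ih =>
    rw [carWord, List.flatMap_cons, List.prod_append, ← carWord, ← ih]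
    simp only [carMonomial, List.map_cons, List.prod_cons]
    congr 1
    generalize k x = j
    fin_cases j <;> simp [carFactor, carFactorWord]

theorem length_carWord_mod_two (l : List Γ) (k : Γ → Fin 4) :
    (carWord a l k).length % 2 = carOddCount l k % 2 := by
  induction l with
  | nil => rfl
  | cons x t ih =>
    have hword : (carWord a (x :: t) k).length
        = (carFactorWord a (k x) x).length + (carWord a t k).length := by
      simp only [carWord, List.flatMap_cons, List.length_append]
    rw [hword, carOddCount, List.countP_cons, ← carOddCount]
    generalize k x = j
    fin_cases j <;> simp [carFactorWord] <;> omega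

theorem mem_carWord {l : List Γ} {k : Γ → Fin 4} {u : A} (hu : u ∈ carWord a l k) :
    ∃ x ∈ l, k x ≠ 0 ∧ (u = a x ∨ u = star (a x)) := by
  obtain ⟨x, hx, hux⟩ := List.mem_flatMap.mp hu
  refine ⟨x, hx, ?_⟩
  generalize k x = j at *
  fin_cases j <;> simp [carFactorWord] at hux ⊢ <;> tauto

end Words

section Monomials

variable {Γ A : Type*} [Ring A] [StarRing A] {a : Γ → A}

theorem carMonomial_congr {l : List Γ} {k k' : Γ → Fin 4} (h : ∀ x ∈ l, k x = k' x) :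
    carMonomial a l k = carMonomial a l k' := by
  simp only [carMonomial, List.map_congr_left fun x hx => congrArg (carFactor a · x) (h x hx)]

theorem carMonomial_cons (x : Γ) (l : List Γ) (k : Γ → Fin 4) :
    carMonomial a (x :: l) k = carFactor a (k x) x * carMonomial a l k :=
  List.prod_cons

theorem carFactor_zero (x : Γ) : carFactor a 0 x = 1 := rfl

theorem carMonomial_singleton (x : Γ) (k : Γ → Fin 4) :
    carMonomial a [x] k = carFactor a (k x) x :=
  List.prod_singleton

theorem carMonomial_filter {l : List Γ} {k : Γ → Fin 4} (p : Γ → Bool)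
    (h : ∀ x ∈ l, p x = false → k x = 0) :
    carMonomial a (l.filter p) k = carMonomial a l k := by
  induction l with
  | nil => rfl
  | cons x t ih =>
    have ht := ih fun y hy => h y (List.mem_cons_of_mem _ hy)
    by_cases hx : p x
    · rw [List.filter_cons_of_pos hx, carMonomial_cons, carMonomial_cons, ht]
    · rw [List.filter_cons_of_neg hx, carMonomial_cons, h x List.mem_cons_self (by simpa using hx),
        ht, carFactor_zero, one_mul]

theorem carOddCount_filter {l : List Γ} {k : Γ → Fin 4} (p : Γ → Bool)
    (h : ∀ x ∈ l, p x = false → k x = 0) :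
    carOddCount (l.filter p) k = carOddCount l k := by
  rw [carOddCount, carOddCount, List.countP_filter]
  refine List.countP_congr fun x hx => ?_
  cases hp : p x <;> simp [hp, h x hx]

theorem carMonomial_mul_carMonomial (hCAR : IsCAR a) {l₁ l₂ : List Γ} {k₁ k₂ : Γ → Fin 4}
    (h : ∀ x ∈ l₁, x ∈ l₂ → k₁ x = 0 ∨ k₂ x = 0) :
    carMonomial a l₁ k₁ * carMonomial a l₂ k₂ =
      (-1 : ℤ) ^ (carOddCount l₁ k₁ * carOddCount l₂ k₂) •
        (carMonomial a l₂ k₂ * carMonomial a l₁ k₁) := by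
  have hanti : ∀ u ∈ carWord a l₁ k₁, ∀ v ∈ carWord a l₂ k₂, u * v = -(v * u) := by
    intro u hu v hv
    obtain ⟨x, hx, hkx, hux⟩ := mem_carWord hu
    obtain ⟨y, hy, hky, hvy⟩ := mem_carWord hv
    refine hCAR.mul_eq_neg_mul_of_ne ?_ hux hvy
    rintro rfl
    exact (h x hx hy).elim hkx hky
  simp only [carMonomial_eq_prod_carWord]
  rw [List.prod_mul_prod_eq_of_forall_anticomm _ _ hanti, neg_one_pow_eq_pow_mod_two, Nat.mul_mod,
    length_carWord_mod_two, length_carWord_mod_two, ← Nat.mul_mod, ← neg_one_pow_eq_pow_mod_two]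

theorem carMonomial_perm (hCAR : IsCAR a) {l l' : List Γ} (hl : l.Nodup) (h : l.Perm l')
    (k : Γ → Fin 4) : ∃ n : ℕ, carMonomial a l k = (-1 : ℤ) ^ n • carMonomial a l' k := by
  induction h with
  | nil => exact ⟨0, by simp⟩
  | cons x _ ih =>
    obtain ⟨n, hn⟩ := ih hl.of_cons
    refine ⟨n, ?_⟩
    rw [carMonomial_cons, carMonomial_cons, hn, mul_smul_comm]
  | swap x y t =>
    have hyx : y ≠ x := fun e => (List.nodup_cons.mp hl).1 (e ▸ List.mem_cons_self)
    refine ⟨carOddCount [y] k * carOddCount [x] k, ?_⟩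
    have hswap := carMonomial_mul_carMonomial hCAR (a := a) (k₁ := k) (k₂ := k)
      fun z hz hz' => absurd ((List.mem_singleton.mp hz).symm.trans (List.mem_singleton.mp hz')) hyx
    rw [carMonomial_singleton, carMonomial_singleton] at hswap
    rw [carMonomial_cons, carMonomial_cons, carMonomial_cons, carMonomial_cons, ← mul_assoc, hswap,
      smul_mul_assoc, mul_assoc]
  | trans h₁₂ _ ih₁₂ ih₂₃ =>
    obtain ⟨m, hm⟩ := ih₁₂ hl
    obtain ⟨n, hn⟩ := ih₂₃ (h₁₂.nodup_iff.mp hl)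
    exact ⟨m + n, by rw [hm, hn, smul_smul, ← pow_add]⟩

-- At every site one of `k₁ x`, `k₂ x` is the trivial index `0`, so `k₁ + k₂` is the merged pattern.
theorem carMonomial_mul_carMonomial_of_nodup (hCAR : IsCAR a) {l : List Γ} (hl : l.Nodup)
    {k₁ k₂ : Γ → Fin 4} (h : ∀ x ∈ l, k₁ x = 0 ∨ k₂ x = 0) :
    ∃ n : ℕ,
      carMonomial a l k₁ * carMonomial a l k₂ = (-1 : ℤ) ^ n • carMonomial a l (k₁ + k₂) := by
  induction l with
  | nil => exact ⟨0, by simp [carMonomial]⟩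
  | cons x t ih =>
    obtain ⟨hxt, ht⟩ := List.nodup_cons.mp hl
    obtain ⟨n, hn⟩ := ih ht fun y hy => h y (List.mem_cons_of_mem _ hy)
    rcases h x List.mem_cons_self with h₁ | h₂
    · have hcomm := carMonomial_mul_carMonomial hCAR (l₁ := t) (l₂ := [x]) (k₁ := k₁) (k₂ := k₂)
        fun z hz hzx => absurd (List.mem_singleton.mp hzx ▸ hz) hxt
      rw [carMonomial_singleton] at hcomm
      refine ⟨carOddCount t k₁ * carOddCount [x] k₂ + n, ?_⟩
      rw [carMonomial_cons, carMonomial_cons, carMonomial_cons, Pi.add_apply, h₁, zero_add,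
        carFactor_zero, one_mul, ← mul_assoc, hcomm, smul_mul_assoc, mul_assoc, hn, mul_smul_comm,
        smul_smul, pow_add]
    · refine ⟨n, ?_⟩
      rw [carMonomial_cons, carMonomial_cons, carMonomial_cons, Pi.add_apply, h₂, add_zero,
        carFactor_zero, one_mul, mul_assoc, hn, mul_smul_comm]

end Monomials

noncomputable def extendPattern {Γ : Type*} (s : Finset Γ) (k : s → Fin 4) : Γ → Fin 4 :=
  fun x => if h : x ∈ s then k ⟨x, h⟩ else 0

theorem extendPattern_of_notMem {Γ : Type*} {s : Finset Γ} (k : s → Fin 4) {x : Γ} (hx : x ∉ s) :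
    extendPattern s k x = 0 :=
  dif_neg hx

section Spans

variable {Γ A : Type*} [Ring A] [StarRing A] [Algebra ℂ A] {a : Γ → A}

theorem anticomm_eq_zero_of_mem_carSpanOdd (hCAR : IsCAR a) {X Y : Finset Γ}
    (hXY : Disjoint X Y) {u v : A} (hu : u ∈ carSpanOdd a X) (hv : v ∈ carSpanOdd a Y) :
    u * v + v * u = 0 := by
  refine anticomm_eq_zero_of_mem_span (R := ℂ) ?_ hu hv
  rintro _ ⟨l₁, k₁, -, rfl, hodd₁, rfl⟩ _ ⟨l₂, k₂, -, rfl, hodd₂, rfl⟩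
  rw [carMonomial_mul_carMonomial hCAR fun x hx₁ hx₂ => (Finset.disjoint_left.mp hXY
      (List.mem_toFinset.mpr hx₁) (List.mem_toFinset.mpr hx₂)).elim,
    (hodd₁.mul hodd₂).neg_one_pow, neg_one_zsmul, neg_add_cancel]

theorem carSpan_le_span_extendPattern (hCAR : IsCAR a) {l : List Γ} (hl : l.Nodup)
    {X : Finset Γ} (hX : X ⊆ l.toFinset) :
    carSpan a X ≤
      Submodule.span ℂ (Set.range fun k : X → Fin 4 => carMonomial a l (extendPattern X k)) := by
  refine Submodule.span_le.mpr ?_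
  rintro _ ⟨l', k, hl', rfl, rfl⟩
  set lX := l.filter fun x => decide (x ∈ l'.toFinset)
  have hperm : l'.Perm lX :=
    List.perm_of_nodup_nodup_toFinset_eq hl' (hl.filter _) (List.toFinset_filter_mem hX).symm
  obtain ⟨n, hn⟩ := carMonomial_perm hCAR hl' hperm k
  have hk : carMonomial a lX k = carMonomial a l (extendPattern l'.toFinset fun x => k x) := by
    rw [← carMonomial_filter (fun x => decide (x ∈ l'.toFinset)) fun x _ hx =>
      extendPattern_of_notMem _ (by simpa using hx)]
    refine carMonomial_congr fun x hx => ?_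
    rw [extendPattern, dif_pos (by simpa using (List.mem_filter.mp hx).2)]
  rw [SetLike.mem_coe, hn, hk]
  exact zsmul_mem (Submodule.subset_span (Set.mem_range_self _)) _

theorem carMonomial_extendPattern_mem_carSpanOdd {l : List Γ} (hl : l.Nodup) {X : Finset Γ}
    (hX : X ⊆ l.toFinset) {k : X → Fin 4} (hk : Odd (carOddCount l (extendPattern X k))) :
    carMonomial a l (extendPattern X k) ∈ carSpanOdd a X := by
  have hoff : ∀ x ∈ l, decide (x ∈ X) = false → extendPattern X k x = 0 :=
    fun x _ hx => extendPattern_of_notMem _ (by simpa using hx)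
  exact Submodule.subset_span ⟨_, _, hl.filter _, List.toFinset_filter_mem hX,
    by rwa [carOddCount_filter _ hoff], (carMonomial_filter _ hoff).symm⟩

end Spans

section Converse

variable {Γ A : Type*} {X Y : Finset Γ}

noncomputable def unionPattern (p : X → Fin 4) (q : Y → Fin 4) : (X ∪ Y : Finset Γ) → Fin 4 :=
  fun x => extendPattern X p x + extendPattern Y q x

theorem extendPattern_unionPattern (p : X → Fin 4) (q : Y → Fin 4) :
    extendPattern (X ∪ Y) (unionPattern p q) = extendPattern X p + extendPattern Y q := by
  funext x
  by_cases hx : x ∈ X ∪ Y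
  · simp [extendPattern, unionPattern, hx]
  · rw [Finset.mem_union, not_or] at hx
    simp [extendPattern, hx]

theorem unionPattern_injective (hXY : Disjoint X Y) :
    Function.Injective fun pq : (X → Fin 4) × (Y → Fin 4) => unionPattern pq.1 pq.2 := by
  rintro ⟨p, q⟩ ⟨p', q'⟩ h
  refine Prod.ext (funext fun ⟨x, hx⟩ => ?_) (funext fun ⟨y, hy⟩ => ?_)
  · simpa [unionPattern, extendPattern, hx, Finset.disjoint_left.mp hXY hx] using
      congrFun h ⟨x, Finset.mem_union_left _ hx⟩
  · simpa [unionPattern, extendPattern, hy, Finset.disjoint_right.mp hXY hy] using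
      congrFun h ⟨y, Finset.mem_union_right _ hy⟩

variable [Ring A] [StarRing A] {a : Γ → A} {l : List Γ}

theorem anticomm_carMonomial_extendPattern (hCAR : IsCAR a) (hXY : Disjoint X Y)
    (hl : l.Nodup) (p : X → Fin 4) (q : Y → Fin 4) : ∃ n : ℕ,
    carMonomial a l (extendPattern X p) * carMonomial a l (extendPattern Y q) +
      carMonomial a l (extendPattern Y q) * carMonomial a l (extendPattern X p) =
      ((1 + (-1) ^ (carOddCount l (extendPattern X p) * carOddCount l (extendPattern Y q))) *
        (-1) ^ n : ℤ) • carMonomial a l (extendPattern (X ∪ Y) (unionPattern p q)) := by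
  have hsupp : ∀ x, extendPattern X p x = 0 ∨ extendPattern Y q x = 0 := fun x => by
    by_cases hx : x ∈ X
    · exact Or.inr (extendPattern_of_notMem _ (Finset.disjoint_left.mp hXY hx))
    · exact Or.inl (extendPattern_of_notMem _ hx)
  obtain ⟨n, hn⟩ := carMonomial_mul_carMonomial_of_nodup hCAR hl fun x _ => hsupp x
  refine ⟨n, ?_⟩
  rw [carMonomial_mul_carMonomial hCAR fun x _ _ => (hsupp x).symm, hn, extendPattern_unionPattern,
    mul_comm (carOddCount _ _), add_mul, one_mul, add_smul, mul_smul]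

variable [Algebra ℂ A]

theorem odd_carOddCount_of_anticomm_eq_zero (hCAR : IsCAR a) (hXY : Disjoint X Y) (hl : l.Nodup)
    (hind : LinearIndependent ℂ fun k : (X ∪ Y : Finset Γ) → Fin 4 =>
      carMonomial a l (extendPattern (X ∪ Y) k))
    {c : (X → Fin 4) → ℂ} {d : (Y → Fin 4) → ℂ}
    (h : (∑ p, c p • carMonomial a l (extendPattern X p)) *
        (∑ q, d q • carMonomial a l (extendPattern Y q)) +
      (∑ q, d q • carMonomial a l (extendPattern Y q)) *
        (∑ p, c p • carMonomial a l (extendPattern X p)) = 0)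
    {p : X → Fin 4} {q : Y → Fin 4} (hp : c p ≠ 0) (hq : d q ≠ 0) :
    Odd (carOddCount l (extendPattern X p)) ∧ Odd (carOddCount l (extendPattern Y q)) := by
  choose n hn using fun pq : (X → Fin 4) × (Y → Fin 4) =>
    anticomm_carMonomial_extendPattern hCAR hXY hl pq.1 pq.2
  rw [sum_smul_anticomm_sum_smul] at h
  simp only [hn, ← Int.cast_smul_eq_zsmul ℂ, smul_smul] at h
  have hcoef := Fintype.linearIndependent_iff.mp (hind.comp _ (unionPattern_injective hXY)) _ h
    (p, q)
  simp only [mul_eq_zero, hp, hq, Int.cast_eq_zero, pow_eq_zero_iff', neg_eq_zero, one_ne_zero,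
    false_and, false_or, or_false] at hcoef
  rw [← Nat.odd_mul, ← Nat.not_even_iff_odd]
  intro heven
  norm_num [heven.neg_one_pow] at hcoef

theorem sum_smul_mem_carSpanOdd (hl : l.Nodup) (hX : X ⊆ l.toFinset) {c : (X → Fin 4) → ℂ}
    (hc : ∀ p, c p ≠ 0 → Odd (carOddCount l (extendPattern X p))) :
    ∑ p, c p • carMonomial a l (extendPattern X p) ∈ carSpanOdd a X :=
  Submodule.sum_mem _ fun p _ => by
    by_cases hp : c p = 0
    · simp [hp]
    · exact Submodule.smul_mem _ _ (carMonomial_extendPattern_mem_carSpanOdd hl hX (hc p hp))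

end Converse

theorem anticommutator_vanishes_iff_odd_general
    {Γ A : Type*} [NormedRing A] [StarRing A] [NormedAlgebra ℂ A]
    (a : Γ → A) (hCAR : IsCAR a)
    (X Y : Finset Γ) (hXY : Disjoint X Y)
    (l : List Γ) (hl : l.Nodup) (hlXY : l.toFinset = X ∪ Y)
    (hind : LinearIndependent ℂ fun k : {x // x ∈ X ∪ Y} → Fin 4 =>
      carMonomial a l fun x => if h : x ∈ X ∪ Y then k ⟨x, h⟩ else 0) :
    (∀ A₀ ∈ carSpanOdd a X, ∀ B₀ ∈ carSpanOdd a Y, A₀ * B₀ + B₀ * A₀ = 0) ∧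
    (∀ A₀ ∈ carSpan a X, ∀ B₀ ∈ carSpan a Y, A₀ * B₀ + B₀ * A₀ = 0 →
      A₀ = 0 ∨ B₀ = 0 ∨ (A₀ ∈ carSpanOdd a X ∧ B₀ ∈ carSpanOdd a Y)) := by
  refine ⟨fun _ hA _ hB => anticomm_eq_zero_of_mem_carSpanOdd hCAR hXY hA hB,
    fun A₀ hA B₀ hB hAB => ?_⟩
  have hX : X ⊆ l.toFinset := hlXY ▸ Finset.subset_union_left
  have hY : Y ⊆ l.toFinset := hlXY ▸ Finset.subset_union_right
  obtain ⟨c, rfl⟩ := (Submodule.mem_span_range_iff_exists_fun ℂ).mp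
    (carSpan_le_span_extendPattern hCAR hl hX hA)
  obtain ⟨d, rfl⟩ := (Submodule.mem_span_range_iff_exists_fun ℂ).mp
    (carSpan_le_span_extendPattern hCAR hl hY hB)
  by_cases hc : c = 0
  · exact Or.inl (by simp [hc])
  by_cases hd : d = 0
  · exact Or.inr (Or.inl (by simp [hd]))
  obtain ⟨p₀, hp₀⟩ := Function.ne_iff.mp hc
  obtain ⟨q₀, hq₀⟩ := Function.ne_iff.mp hd
  have hodd {p q} := odd_carOddCount_of_anticomm_eq_zero hCAR hXY hl hind hAB (p := p) (q := q)
  exact Or.inr (Or.inr ⟨sum_smul_mem_carSpanOdd hl hX fun p hp => (hodd hp hq₀).1,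
    sum_smul_mem_carSpanOdd hl hY fun q hq => (hodd hp₀ hq).2⟩)

/-- if `A ∈ 𝔄_X⁻` and `B ∈ 𝔄_Y⁻` with `X ∩ Y = ∅` then `{A,B} = 0`; conversely,
if the monomials supported in `X ∪ Y` (for a fixed enumeration `l`) are linearly independent,
`A ∈ 𝔄_X`, `B ∈ 𝔄_Y` and `{A,B} = 0`, then `A = 0`, or `B = 0`, or both `A ∈ 𝔄_X⁻` and
`B ∈ 𝔄_Y⁻`. -/
theorem anticommutator_vanishes_iff_odd
    {Γ A : Type*} [NormedRing A] [StarRing A] [CStarRing A] [NormedAlgebra ℂ A]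
    (a : Γ → A) (hCAR : IsCAR a)
    (X Y : Finset Γ) (hXY : Disjoint X Y)
    (l : List Γ) (hl : l.Nodup) (hlXY : l.toFinset = X ∪ Y)
    (hind : LinearIndependent ℂ fun k : {x // x ∈ X ∪ Y} → Fin 4 =>
      carMonomial a l fun x => if h : x ∈ X ∪ Y then k ⟨x, h⟩ else 0) :
    (∀ A₀ ∈ carSpanOdd a X, ∀ B₀ ∈ carSpanOdd a Y, A₀ * B₀ + B₀ * A₀ = 0) ∧
    (∀ A₀ ∈ carSpan a X, ∀ B₀ ∈ carSpan a Y, A₀ * B₀ + B₀ * A₀ = 0 →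
      A₀ = 0 ∨ B₀ = 0 ∨ (A₀ ∈ carSpanOdd a X ∧ B₀ ∈ carSpanOdd a Y)) :=
  anticommutator_vanishes_iff_odd_general a hCAR X Y hXY l hl hlXY hind
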